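/- Let a ≥ 0 and n ∈ ℕ, and let ν_{n,r}^a(x) = Σ_{k=0}^{∞} W_{n,k}^a(x)·(k/(n+1))^r denote the r-th order moment of the generalized Baskakov operator B_{n,a}^*. Then for all x ≥ 0: ν_{n,0}^a(x) = 1, ν_{n,1}^a(x) = (1/(n+1))·(nx + ax/(1+x)), and for every r ∈ ℕ₀ and x > 0 the recurrence x(1+x)²·(ν_{n,r}^a)′(x) = (n+1)(1+x)·ν_{n,r+1}^a(x) − (a + n(1+x))·x·ν_{n,r}^a(x) holds. -/

import Mathlib

open MeasureTheory Filter

noncomputable section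

/-- Rising factorial `(n)_i = n(n+1)⋯(n+i-1)`, with `(n)_0 = 1`. -/
def risingFac (n : ℕ) : ℕ → ℝ
  | 0 => 1
  | i + 1 => risingFac n i * ((n : ℝ) + i)

/-- `P_k(n,a) = Σ_{i=0}^{k} C(k,i) (n)_i a^(k-i)`. -/
def Pba (k n : ℕ) (a : ℝ) : ℝ :=
  ∑ i ∈ Finset.range (k + 1), (k.choose i : ℝ) * risingFac n i * a ^ (k - i)

/-- Generalized Baskakov basis function `W_{n,k}^a(x)`. -/
def Wgb (a : ℝ) (n k : ℕ) (x : ℝ) : ℝ :=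
  Real.exp (-(a * x) / (1 + x)) * (Pba k n a / (Nat.factorial k : ℝ)) * x ^ k /
    (1 + x) ^ (n + k)

/-- Generalized Baskakov–Kantorovich operator `K_n^a(f;x)`. -/
def Kgb (a : ℝ) (n : ℕ) (f : ℝ → ℝ) (x : ℝ) : ℝ :=
  ((n : ℝ) + 1) * ∑' k : ℕ,
    Wgb a n k x * ∫ t in ((k : ℝ) / ((n : ℝ) + 1))..(((k : ℝ) + 1) / ((n : ℝ) + 1)), f t


/-- `r`-th order moment `ν_{n,r}^a(x)` of the generalized Baskakov operator. -/
def nuMoment (a : ℝ) (n r : ℕ) (x : ℝ) : ℝ :=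
  ∑' k : ℕ, Wgb a n k x * ((k : ℝ) / ((n : ℝ) + 1)) ^ r

/-!
With `t = x / (1 + x)` one has `W_{n,k}^a(x) = e^{-at} (1 + x)^{-n} c_k t^k`, where
`c_k = P_k(n,a) / k!` is the Cauchy product of the coefficients of `(1 - t)^{-n}` and `e^{at}`.
Hence `∑ c_k t^k = (1 - t)^{-n} e^{at}`, which is exactly `ν_{n,0}^a = 1`.
Each `W_{n,k}^a` has logarithmic derivative `(k(1 + x) - (a + n(1 + x))x) / (x(1 + x)^2)`, and
near a point `x > 0` the differentiated series is dominated by `∑ c_k k^m θ^k` with `θ < 1`, so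
termwise differentiation gives the recurrence. Since `ν_{n,0}^a` is constant, the recurrence at
`r = 0` determines `ν_{n,1}^a`.
-/

open Finset Topology
open scoped Nat

lemma risingFac_eq_ascFactorial (n : ℕ) : ∀ i, risingFac n i = n.ascFactorial i
  | 0 => by simp [risingFac]
  | i + 1 => by
    rw [risingFac, risingFac_eq_ascFactorial n i, Nat.ascFactorial_succ]
    push_cast
    ring

lemma risingFac_nonneg (n i : ℕ) : 0 ≤ risingFac n i := by
  rw [risingFac_eq_ascFactorial]; positivity

lemma Pba_nonneg (k n : ℕ) {a : ℝ} (ha : 0 ≤ a) : 0 ≤ Pba k n a :=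
  Finset.sum_nonneg fun i _ => by have := risingFac_nonneg n i; positivity

lemma hasSum_risingFac_div_factorial_mul_pow (n : ℕ) {t : ℝ} (ht : |t| < 1) :
    HasSum (fun i => risingFac n i / i ! * t ^ i) ((1 - t)⁻¹ ^ n) := by
  cases n with
  | zero =>
    convert hasSum_ite_eq 0 (1 : ℝ) using 1
    · ext i
      cases i <;> simp [risingFac_eq_ascFactorial, Nat.zero_ascFactorial]
    · simp
  | succ m =>
    have h := hasSum_choose_mul_geometric_of_norm_lt_one m (r := t) ht
    rw [one_div, ← inv_pow] at h
    refine h.congr_fun fun i => ?_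
    rw [risingFac_eq_ascFactorial, Nat.ascFactorial_eq_factorial_mul_choose, add_comm m i,
      Nat.choose_symm_add]
    push_cast
    field_simp

lemma Pba_div_factorial_eq_sum (k n : ℕ) (a : ℝ) : Pba k n a / k !
    = ∑ i ∈ range (k + 1), risingFac n i / i ! * (a ^ (k - i) / (k - i)!) := by
  rw [Pba, Finset.sum_div]
  refine Finset.sum_congr rfl fun i hi => ?_
  have hik : i ≤ k := Nat.lt_succ_iff.mp (mem_range.mp hi)
  have hchoose : (k.choose i : ℝ) * i ! * (k - i)! = k ! := by
    exact_mod_cast Nat.choose_mul_factorial_mul_factorial hik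
  field_simp
  linear_combination risingFac n i * a ^ (k - i) * hchoose

lemma hasSum_Pba_div_factorial_mul_pow (n : ℕ) (a : ℝ) {t : ℝ} (ht : |t| < 1) :
    HasSum (fun k => Pba k n a / k ! * t ^ k) ((1 - t)⁻¹ ^ n * Real.exp (a * t)) := by
  have hbin := hasSum_risingFac_div_factorial_mul_pow n ht
  have hexp : HasSum (fun j => (a * t) ^ j / j !) (Real.exp (a * t)) := by
    rw [Real.exp_eq_exp_ℝ]; exact NormedSpace.expSeries_div_hasSum_exp _
  have hbin_norm : Summable fun i => ‖risingFac n i / i ! * t ^ i‖ := by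
    simpa [abs_mul, abs_pow, abs_of_nonneg (risingFac_nonneg n _)] using
      (hasSum_risingFac_div_factorial_mul_pow n (t := |t|) (by simpa using ht)).summable
  have hexp_norm : Summable fun j => ‖(a * t) ^ j / (j ! : ℝ)‖ := by
    simpa [abs_mul, abs_pow] using Real.summable_pow_div_factorial |a * t|
  have h := hasSum_sum_range_mul_of_summable_norm hbin_norm hexp_norm
  rw [hbin.tsum_eq, hexp.tsum_eq] at h
  refine h.congr_fun fun k => ?_
  rw [Pba_div_factorial_eq_sum, Finset.sum_mul]
  refine Finset.sum_congr rfl fun i hi => ?_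
  have hik : i ≤ k := Nat.lt_succ_iff.mp (mem_range.mp hi)
  rw [mul_pow, ← Nat.add_sub_cancel' hik, pow_add, Nat.add_sub_cancel_left]
  ring

lemma Wgb_eq_mul_pow (a : ℝ) (n k : ℕ) {x : ℝ} (hx : 1 + x ≠ 0) :
    Wgb a n k x =
      Real.exp (-(a * x) / (1 + x)) / (1 + x) ^ n * (Pba k n a / k ! * (x / (1 + x)) ^ k) := by
  rw [Wgb, div_pow, pow_add]
  field_simp

lemma hasSum_Wgb (a : ℝ) (n : ℕ) {x : ℝ} (hx : 0 ≤ x) :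
    HasSum (fun k => Wgb a n k x) 1 := by
  have hx1 : 0 < 1 + x := by linarith
  have ht : |x / (1 + x)| < 1 := by
    rw [abs_of_nonneg (by positivity), div_lt_one hx1]; linarith
  have h := (hasSum_Pba_div_factorial_mul_pow n a ht).mul_left
    (Real.exp (-(a * x) / (1 + x)) / (1 + x) ^ n)
  have hsum : Real.exp (-(a * x) / (1 + x)) / (1 + x) ^ n *
      ((1 - x / (1 + x))⁻¹ ^ n * Real.exp (a * (x / (1 + x)))) = 1 := by
    have hinv : (1 - x / (1 + x))⁻¹ = 1 + x := by field_simp; ring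
    rw [hinv, neg_div, Real.exp_neg, mul_div_assoc]
    field_simp
  rw [hsum] at h
  exact h.congr_fun fun k => Wgb_eq_mul_pow a n k hx1.ne'

lemma Wgb_nonneg {a : ℝ} (ha : 0 ≤ a) (n k : ℕ) {x : ℝ} (hx : 0 ≤ x) :
    0 ≤ Wgb a n k x := by
  have := Pba_nonneg k n ha
  unfold Wgb; positivity

lemma Wgb_le {a : ℝ} (ha : 0 ≤ a) (n k : ℕ) {x : ℝ} (hx : 0 ≤ x) :
    Wgb a n k x ≤ Pba k n a / k ! * (x / (1 + x)) ^ k := by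
  have hx1 : 0 < 1 + x := by linarith
  have hfactor : Real.exp (-(a * x) / (1 + x)) / (1 + x) ^ n ≤ 1 := by
    rw [div_le_one (by positivity)]
    calc Real.exp (-(a * x) / (1 + x)) ≤ 1 := Real.exp_le_one_iff.mpr (by
          rw [neg_div]; exact neg_nonpos.mpr (by positivity))
      _ ≤ (1 + x) ^ n := one_le_pow₀ (by linarith)
  rw [Wgb_eq_mul_pow a n k hx1.ne']
  have := Pba_nonneg k n ha
  exact mul_le_of_le_one_left (by positivity) hfactor

lemma summable_mul_natCast_pow_mul_pow_of_lt {c : ℕ → ℝ} (hc : ∀ k, 0 ≤ c k) {s t : ℝ}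
    (ht : 0 ≤ t) (hts : t < s) (hs : Summable fun k => c k * s ^ k) (m : ℕ) :
    Summable fun k => c k * (k : ℝ) ^ m * t ^ k := by
  have hs0 : 0 < s := ht.trans_lt hts
  have hρ : |t / s| < 1 := by
    rw [abs_of_nonneg (by positivity), div_lt_one hs0]; exact hts
  have hsmall : ∀ᶠ k : ℕ in atTop, (k : ℝ) ^ m * (t / s) ^ k < 1 :=
    (tendsto_pow_const_mul_const_pow_of_abs_lt_one m hρ).eventually (gt_mem_nhds one_pos)
  refine hs.of_norm_bounded_eventually_nat (hsmall.mono fun k hk => ?_)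
  have hcs : 0 ≤ c k * s ^ k := mul_nonneg (hc k) (by positivity)
  calc ‖c k * (k : ℝ) ^ m * t ^ k‖ = c k * s ^ k * ((k : ℝ) ^ m * (t / s) ^ k) := by
        rw [Real.norm_of_nonneg (by have := hc k; positivity), div_pow]
        field_simp
    _ ≤ c k * s ^ k := mul_le_of_le_one_right hcs hk.le

lemma summable_Pba_div_factorial_mul_natCast_pow_mul_pow {a : ℝ} (ha : 0 ≤ a) (n : ℕ)
    {t : ℝ} (ht : 0 ≤ t) (ht1 : t < 1) (m : ℕ) :
    Summable fun k => Pba k n a / k ! * (k : ℝ) ^ m * t ^ k := by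
  have hc (k : ℕ) : 0 ≤ Pba k n a / k ! := by have := Pba_nonneg k n ha; positivity
  refine summable_mul_natCast_pow_mul_pow_of_lt hc ht (s := (1 + t) / 2) (by linarith) ?_ m
  refine (hasSum_Pba_div_factorial_mul_pow n a ?_).summable
  rw [abs_of_nonneg (by positivity)]; linarith

lemma summable_Wgb_mul_pow {a : ℝ} (ha : 0 ≤ a) (n : ℕ) {x : ℝ} (hx : 0 ≤ x) (r : ℕ) :
    Summable fun k => Wgb a n k x * ((k : ℝ) / (n + 1)) ^ r := by
  have ht : x / (1 + x) < 1 := by rw [div_lt_one (by linarith)]; linarith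
  refine (summable_Pba_div_factorial_mul_natCast_pow_mul_pow ha n (by positivity) ht r
    ).of_nonneg_of_le (fun k => mul_nonneg (Wgb_nonneg ha n k hx) (by positivity)) fun k => ?_
  have hq : ((k : ℝ) / (n + 1)) ^ r ≤ (k : ℝ) ^ r :=
    pow_le_pow_left₀ (by positivity) (div_le_self (by positivity) (by linarith)) r
  calc Wgb a n k x * ((k : ℝ) / (n + 1)) ^ r
      ≤ Pba k n a / k ! * (x / (1 + x)) ^ k * (k : ℝ) ^ r :=
        mul_le_mul (Wgb_le ha n k hx) hq (by positivity) (by have := Pba_nonneg k n ha; positivity)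
    _ = Pba k n a / k ! * (k : ℝ) ^ r * (x / (1 + x)) ^ k := by ring

def logDerivWgb (a : ℝ) (n k : ℕ) (y : ℝ) : ℝ :=
  (k * (1 + y) - (a + n * (1 + y)) * y) / (y * (1 + y) ^ 2)

lemma hasDerivAt_Wgb (a : ℝ) (n k : ℕ) {y : ℝ} (hy : y ≠ 0) (hy1 : 1 + y ≠ 0) :
    HasDerivAt (Wgb a n k) (logDerivWgb a n k y * Wgb a n k y) y := by
  have hlin : HasDerivAt (fun z : ℝ => 1 + z) 1 y := (hasDerivAt_id y).const_add 1
  have hexponent : HasDerivAt (fun z : ℝ => -(a * z) / (1 + z)) (-a / (1 + y) ^ 2) y := by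
    refine ((((hasDerivAt_id' y).const_mul a).fun_neg).fun_div hlin hy1).congr_deriv ?_
    field_simp
    ring
  refine ((((hexponent.exp.mul_const (Pba k n a / k !)).fun_mul (hasDerivAt_pow k y)).fun_div
    (hlin.fun_pow (n + k)) (pow_ne_zero _ hy1))).congr_deriv ?_
  rw [Wgb, logDerivWgb]
  rcases k with _ | k
  · rcases n with _ | n
    · simp only [Nat.factorial_zero, Nat.cast_one, div_one, pow_zero, mul_one,
        CharP.cast_eq_zero, zero_tsub, mul_zero, add_zero, sub_zero, one_pow, zero_mul, zero_sub]
      field_simp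
    · simp only [Nat.add_zero, Nat.add_sub_cancel, pow_succ]
      push_cast
      field_simp
      ring
  · simp only [Nat.add_sub_cancel, pow_succ, Nat.add_succ_sub_one]
    push_cast
    field_simp
    ring

lemma abs_logDerivWgb_le {a : ℝ} (ha : 0 ≤ a) (n k : ℕ) {y : ℝ} (hy : 0 < y) :
    |logDerivWgb a n k y| ≤ (k + a + n) / y := by
  rw [logDerivWgb, abs_div, abs_of_pos (by positivity : 0 < y * (1 + y) ^ 2),
    div_le_div_iff₀ (by positivity) hy]
  have hA : 0 ≤ (k : ℝ) * (1 + y) := by positivity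
  have hB : 0 ≤ (a + n * (1 + y)) * y := by positivity
  have hslack : 0 ≤ k * y ^ 2 * (1 + y) + a * y * (1 + y + y ^ 2) + n * y * (1 + y) := by
    positivity
  calc |k * (1 + y) - (a + n * (1 + y)) * y| * y
      ≤ (k * (1 + y) + (a + n * (1 + y)) * y) * y := by
        gcongr
        exact abs_sub_le_iff.mpr ⟨by linarith, by linarith⟩
    _ = (k + a + n) * (y * (1 + y) ^ 2)
          - (k * y ^ 2 * (1 + y) + a * y * (1 + y + y ^ 2) + n * y * (1 + y)) := by ring
    _ ≤ (k + a + n) * (y * (1 + y) ^ 2) := by linarith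

lemma abs_logDerivWgb_mul_Wgb_le {a : ℝ} (ha : 0 ≤ a) (n k : ℕ) {y b : ℝ} (hy : 0 < y)
    (hyb : y ≤ b) :
    |logDerivWgb a n k y * Wgb a n k y| ≤
      (k + a + n) / y * (Pba k n a / k ! * (b / (1 + b)) ^ k) := by
  have hratio : y / (1 + y) ≤ b / (1 + b) := by
    rw [div_le_div_iff₀ (by linarith) (by linarith)]; nlinarith
  have := Pba_nonneg k n ha
  rw [abs_mul, abs_of_nonneg (Wgb_nonneg ha n k hy.le)]
  exact mul_le_mul (abs_logDerivWgb_le ha n k hy) ((Wgb_le ha n k hy.le).trans (by gcongr))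
    (Wgb_nonneg ha n k hy.le) (by positivity)

lemma hasDerivAt_nuMoment {a : ℝ} (ha : 0 ≤ a) (n r : ℕ) {x : ℝ} (hx : 0 < x) :
    HasDerivAt (nuMoment a n r)
      (∑' k, logDerivWgb a n k x * Wgb a n k x * ((k : ℝ) / (n + 1)) ^ r) x := by
  set θ := 2 * x / (1 + 2 * x)
  have hθ : θ < 1 := by rw [div_lt_one (by positivity)]; linarith
  let u : ℕ → ℝ := fun k => 2 / x * ((k + a + n) * (Pba k n a / k ! * θ ^ k) * (k : ℝ) ^ r)
  have hu : Summable u := by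
    have h := ((summable_Pba_div_factorial_mul_natCast_pow_mul_pow ha n (by positivity) hθ
      (r + 1)).add ((summable_Pba_div_factorial_mul_natCast_pow_mul_pow ha n (by positivity) hθ
      r).mul_left (a + n))).mul_left (2 / x)
    exact h.congr fun k => by simp only [u]; ring
  have hmem : x ∈ Set.Ioo (x / 2) (2 * x) := ⟨by linarith, by linarith⟩
  refine hasDerivAt_tsum_of_isPreconnected hu isOpen_Ioo isPreconnected_Ioo
    (fun k y hy => (hasDerivAt_Wgb a n k (by linarith [hy.1]) (by linarith [hy.1])).mul_const _)
    (fun k y hyI => ?_) hmem (summable_Wgb_mul_pow ha n hx.le r) hmem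
  have hy : 0 < y := by linarith [hyI.1]
  have hq : ((k : ℝ) / (n + 1)) ^ r ≤ (k : ℝ) ^ r :=
    pow_le_pow_left₀ (by positivity) (div_le_self (by positivity) (by linarith)) r
  have hinv : 1 / y ≤ 2 / x := by rw [div_le_div_iff₀ hy hx]; linarith [hyI.1]
  have := Pba_nonneg k n ha
  rw [norm_mul, Real.norm_eq_abs, norm_pow, Real.norm_of_nonneg (by positivity)]
  calc |logDerivWgb a n k y * Wgb a n k y| * ((k : ℝ) / (n + 1)) ^ r
      ≤ (k + a + n) / y * (Pba k n a / k ! * θ ^ k) * (k : ℝ) ^ r := by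
        gcongr
        exact abs_logDerivWgb_mul_Wgb_le ha n k hy hyI.2.le
    _ = 1 / y * ((k + a + n) * (Pba k n a / k ! * θ ^ k) * (k : ℝ) ^ r) := by ring
    _ ≤ u k := mul_le_mul_of_nonneg_right hinv (by positivity)

lemma nuMoment_zero (a : ℝ) (n : ℕ) {x : ℝ} (hx : 0 ≤ x) : nuMoment a n 0 x = 1 := by
  simpa [nuMoment] using (hasSum_Wgb a n hx).tsum_eq

lemma nuMoment_recurrence {a : ℝ} (ha : 0 ≤ a) (n r : ℕ) {x : ℝ} (hx : 0 < x) :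
    x * (1 + x) ^ 2 * deriv (nuMoment a n r) x =
      ((n : ℝ) + 1) * (1 + x) * nuMoment a n (r + 1) x -
        (a + (n : ℝ) * (1 + x)) * x * nuMoment a n r x := by
  have hterm : ∀ k : ℕ,
      x * (1 + x) ^ 2 * (logDerivWgb a n k x * Wgb a n k x * ((k : ℝ) / (n + 1)) ^ r)
        = ((n : ℝ) + 1) * (1 + x) * (Wgb a n k x * ((k : ℝ) / (n + 1)) ^ (r + 1))
          - (a + (n : ℝ) * (1 + x)) * x * (Wgb a n k x * ((k : ℝ) / (n + 1)) ^ r) := by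
    intro k
    have hcancel :
        x * (1 + x) ^ 2 * logDerivWgb a n k x = k * (1 + x) - (a + n * (1 + x)) * x := by
      rw [logDerivWgb]; field_simp
    have hq : ((n : ℝ) + 1) * ((k : ℝ) / (n + 1)) = k := by field_simp
    rw [pow_succ]
    linear_combination Wgb a n k x * ((k : ℝ) / (n + 1)) ^ r * hcancel
      - (1 + x) * Wgb a n k x * ((k : ℝ) / (n + 1)) ^ r * hq
  rw [(hasDerivAt_nuMoment ha n r hx).deriv, ← tsum_mul_left, tsum_congr hterm,
    Summable.tsum_sub ((summable_Wgb_mul_pow ha n hx.le (r + 1)).mul_left _)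
      ((summable_Wgb_mul_pow ha n hx.le r).mul_left _), tsum_mul_left, tsum_mul_left]
  rfl

lemma nuMoment_one {a : ℝ} (ha : 0 ≤ a) (n : ℕ) {x : ℝ} (hx : 0 ≤ x) :
    nuMoment a n 1 x = 1 / ((n : ℝ) + 1) * ((n : ℝ) * x + a * x / (1 + x)) := by
  rcases hx.eq_or_lt with rfl | hx
  · have hterm : ∀ k : ℕ, Wgb a n k 0 * ((k : ℝ) / (n + 1)) = 0 := by
      rintro (_ | k) <;> simp [Wgb]
    simp [nuMoment, hterm]
  have hconst : nuMoment a n 0 =ᶠ[𝓝 x] fun _ => 1 :=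
    eventually_of_mem (Ioi_mem_nhds hx) fun y hy => nuMoment_zero a n (le_of_lt hy)
  have hrec := nuMoment_recurrence ha n 0 hx
  rw [hconst.deriv_eq, deriv_const, nuMoment_zero a n hx.le] at hrec
  field_simp
  linear_combination -hrec

/-- values and recurrence for the moments `ν_{n,r}^a`. -/
theorem statement12 (a : ℝ) (ha : 0 ≤ a) (n : ℕ) :
    (∀ x : ℝ, 0 ≤ x → nuMoment a n 0 x = 1) ∧
    (∀ x : ℝ, 0 ≤ x →
      nuMoment a n 1 x = (1 / ((n : ℝ) + 1)) * ((n : ℝ) * x + a * x / (1 + x))) ∧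
    (∀ r : ℕ, ∀ x : ℝ, 0 < x →
      x * (1 + x) ^ 2 * deriv (nuMoment a n r) x =
        ((n : ℝ) + 1) * (1 + x) * nuMoment a n (r + 1) x -
          (a + (n : ℝ) * (1 + x)) * x * nuMoment a n r x) :=
  ⟨fun _ hx => nuMoment_zero a n hx, fun _ hx => nuMoment_one ha n hx,
    fun r _ hx => nuMoment_recurrence ha n r hx⟩
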